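/- Let M be a matroid on a finite set S with |S| = n and rank_M(S) = r. Call A ⊆ S a T-flat of level k if S \ A is a proper flat of the dual matroid M* and |A| - rank_M(A) - 1 = k. Then the number of T-flats of level k is at most C(n, r + k + 1). -/

import Mathlib

open Matroid Set

variable {α : Type*}

/-- The rank of a subset `A` in a matroid `M`:
the maximum cardinality of an independent subset of `A`. -/
noncomputable def mrank (M : Matroid α) (A : Set α) : ℕ :=
  sSup {n | ∃ X ⊆ A, M.Indep X ∧ X.ncard = n}

/-- `F` is a flat of `M` if adding any point of the ground set outside `F`
increases the rank by one. -/
def IsFlat (M : Matroid α) (F : Set α) : Prop :=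
  F ⊆ M.E ∧ ∀ x ∈ M.E, x ∉ F → mrank M (insert x F) = mrank M F + 1

/-- A circuit is a minimal dependent set. -/
def IsCircuit (M : Matroid α) (C : Set α) : Prop :=
  Minimal M.Dep C

/-- The level of a subset `A`: `|A| - rank(A) - 1`. -/
noncomputable def level (M : Matroid α) (A : Set α) : ℤ :=
  (A.ncard : ℤ) - (mrank M A : ℤ) - 1

/-- `A` is a T-flat of `M` if its complement is a proper flat of the dual matroid. -/
def IsTFlat (M : Matroid α) (A : Set α) : Prop :=
  A ⊆ M.E ∧ _root_.IsFlat M✶ (M.E \ A) ∧ M.E \ A ≠ M.E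

/-! The complement of a T-flat `A` of level `k` is a flat of `M✶` of rank
`|E \ A| - r + rank A = n - r - k - 1`, and complementation is injective, so it suffices to
count flats of a given rank `m`. A flat is the closure of each of its bases, so sending a flat
to a chosen basis injects the flats of rank `m` into the `m`-subsets of `E`; finally
`C(n, n - r - k - 1) = C(n, r + k + 1)`. -/

namespace Matroid

variable {M : Matroid α} {A F I X : Set α}

lemma IsBasis'.mrank_eq_ncard [M.RankFinite] (hI : M.IsBasis' I A) : mrank M A = I.ncard := by
  refine IsGreatest.csSup_eq ⟨⟨I, hI.subset, hI.indep, rfl⟩, ?_⟩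
  rintro _ ⟨Y, hYA, hY, rfl⟩
  have hle : Y.encard ≤ I.encard := hI.encard_eq_eRk ▸ hY.encard_le_eRk_of_subset hYA
  rwa [← hY.finite.cast_ncard_eq, ← hI.indep.finite.cast_ncard_eq, Nat.cast_le] at hle

lemma cast_mrank_eq_eRk [M.RankFinite] (A : Set α) : (mrank M A : ℕ∞) = M.eRk A := by
  obtain ⟨I, hI⟩ := M.exists_isBasis' A
  rw [hI.mrank_eq_ncard, hI.indep.finite.cast_ncard_eq, hI.encard_eq_eRk]

lemma mrank_insert_of_mem_closure [M.RankFinite] {x : α} (hx : x ∈ M.closure A) :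
    mrank M (insert x A) = mrank M A := by
  apply Nat.cast_injective (R := ℕ∞)
  rw [cast_mrank_eq_eRk, cast_mrank_eq_eRk, ← eRk_insert_closure_eq, insert_eq_of_mem hx,
    eRk_closure_eq]

theorem _root_.IsFlat.isFlat [M.RankFinite] (hF : _root_.IsFlat M F) : M.IsFlat F := by
  refine isFlat_iff_closure_eq.2 <| (M.subset_closure F hF.1).antisymm' fun x hx ↦ ?_
  by_contra hxF
  have hrank := hF.2 x (mem_ground_of_mem_closure hx) hxF
  rw [mrank_insert_of_mem_closure hx] at hrank
  omega

lemma ncard_setOf_isFlat_mrank_eq_le [M.Finite] (m : ℕ) :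
    {F | M.IsFlat F ∧ mrank M F = m}.ncard ≤ M.E.ncard.choose m := by
  choose! basis hbasis using fun F : Set α ↦ M.exists_isBasis' F
  rw [← ncard_powerset_ncard M.ground_finite]
  refine ncard_le_ncard_of_injOn basis (fun F ⟨_, hF⟩ ↦ ⟨(hbasis F).indep.subset_ground, ?_⟩)
    (fun F₁ ⟨hF₁, _⟩ F₂ ⟨hF₂, _⟩ h ↦ ?_) (M.ground_finite.finite_subsets.subset fun _ ↦ And.left)
  · rw [← hF, (hbasis F).mrank_eq_ncard]
  · rw [← hF₁.closure, ← hF₂.closure, ← (hbasis F₁).closure_eq_closure,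
      ← (hbasis F₂).closure_eq_closure, h]

lemma mrank_dual_add_mrank_ground [M.Finite] (hX : X ⊆ M.E) :
    mrank M✶ X + mrank M M.E = mrank M (M.E \ X) + X.ncard := by
  apply Nat.cast_injective (R := ℕ∞)
  push_cast
  rw [cast_mrank_eq_eRk, cast_mrank_eq_eRk, cast_mrank_eq_eRk, eRk_ground,
    (M.ground_finite.subset hX).cast_ncard_eq]
  exact M.eRk_dual_add_eRank X hX

lemma mrank_dual_compl_add_level [M.Finite] (hA : A ⊆ M.E) :
    (mrank M✶ (M.E \ A) : ℤ) + mrank M M.E + level M A + 1 = M.E.ncard := by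
  have hdual := mrank_dual_add_mrank_ground (M := M) (sdiff_subset (s := M.E) (t := A))
  have hcompl := ncard_sdiff_add_ncard_of_subset hA M.ground_finite
  rw [sdiff_sdiff_cancel_left hA] at hdual
  unfold level
  omega

end Matroid

/-- The number of T-flats of level `k` is at most `C(n, r + k + 1)`. -/
theorem card_tflats_le (M : Matroid α) (n r k : ℕ) (hfin : M.E.Finite)
    (hn : M.E.ncard = n) (hr : mrank M M.E = r) :
    {A : Set α | IsTFlat M A ∧ level M A = (k : ℤ)}.ncard ≤ n.choose (r + k + 1) := by
  have : M.Finite := ⟨hfin⟩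
  set T := {A : Set α | IsTFlat M A ∧ level M A = (k : ℤ)}
  have hcorank : ∀ A ∈ T, mrank M✶ (M.E \ A) + (r + k + 1) = n := fun A ⟨hA, hlevel⟩ ↦ by
    have := mrank_dual_compl_add_level hA.1
    omega
  obtain hempty | ⟨A₀, hA₀⟩ := T.eq_empty_or_nonempty
  · simp [hempty]
  set m := mrank M✶ (M.E \ A₀)
  calc T.ncard ≤ {F | M✶.IsFlat F ∧ mrank M✶ F = m}.ncard := by
        refine ncard_le_ncard_of_injOn (M.E \ ·)
          (fun A hA ↦ ⟨hA.1.2.1.isFlat, Nat.add_right_cancel ((hcorank A hA).trans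
            (hcorank A₀ hA₀).symm)⟩) (fun A₁ hA₁ A₂ hA₂ h ↦ ?_)
          (hfin.finite_subsets.subset fun F hF ↦ hF.1.subset_ground)
        rw [← sdiff_sdiff_cancel_left hA₁.1.1, ← sdiff_sdiff_cancel_left hA₂.1.1]
        exact congrArg (M.E \ ·) h
    _ ≤ n.choose m := hn ▸ ncard_setOf_isFlat_mrank_eq_le m
    _ = n.choose (r + k + 1) := Nat.choose_symm_of_eq_add (hcorank A₀ hA₀).symm
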